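/- For each fixed n ≥ 1, the coefficients of p_{α,n}(ζ) = Σ_{k=0}^{n} c_{α,n,k}ζ^k (defined by the recursion from p_{α,1}(ζ)=4(2+α)+4(2+α)²ζ) satisfy: |c_{α,n,n}| ≍ α^{2n} and |c_{α,n,k}| ≲ α^{2n-1} for k < n, as α → ∞. Consequently, there exists α₀ > -1 such that for all α > α₀, |c_{α,n,n}| > Σ_{k=0}^{n-1} |c_{α,n,k}|. -/

import Mathlib

/-!
In terms of coefficients the recursion is a three-term recurrence: with `a = 2 + α + 2m`,
`c_{m+1,0} = 4 c_{m,1} + 4a c_{m,0}` and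
`c_{m+1,k+1} = 4(k+2)² c_{m,k+2} + 4((2k+3)a - 2(k+1)²) c_{m,k+1} + 4(a-k)² c_{m,k}`.
Starting from `p_{α,0} = 1`, induction on `m` gives `deg p_{α,m} ≤ m`, hence the leading
coefficient `c_{α,m,m} = 4ᵐ ∏_{t<m} (α+2+t)² ≥ 4ᵐ α^{2m}`, and `c_{α,m,k} = O(α^{m+k})`,
since with `a = O(α)` each of the three terms above is `O(α^{m+k+2})`.
For `k < n` this gives `c_{α,n,k} = O(α^{2n-1}) = o(α^{2n})`.
-/

open Polynomial

/-- The recursion defining the numerator polynomials `p_{α,n}` of the iterated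
associated-weight Bergman kernels. -/
def IsKernelNumeratorSeq (α : ℝ) (p : ℕ → Polynomial ℂ) : Prop :=
  p 1 = C (4 * (2 + (α:ℂ))) + C (4 * (2 + (α:ℂ)) ^ 2) * X ∧
  ∀ m : ℕ, 1 ≤ m → p (m + 1) =
    4 * derivative (p m) * (1 - X) ^ 2
    + C (4 * (2 + (α:ℂ) + 2 * (m:ℂ))) * p m * (1 - X)
    + 4 * X * derivative (derivative (p m)) * (1 - X) ^ 2
    + C (8 * (2 + (α:ℂ) + 2 * (m:ℂ))) * X * derivative (p m) * (1 - X)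
    + C (4 * (2 + (α:ℂ) + 2 * (m:ℂ)) * (3 + (α:ℂ) + 2 * (m:ℂ))) * X * p m

open Asymptotics Filter Finset

noncomputable def kernelStep (a : ℂ) (q : ℂ[X]) : ℂ[X] :=
  4 * derivative q * (1 - X) ^ 2 + C (4 * a) * q * (1 - X)
    + 4 * X * derivative (derivative q) * (1 - X) ^ 2
    + C (8 * a) * X * derivative q * (1 - X) + C (4 * a * (a + 1)) * X * q

theorem kernelStep_eq (a : ℂ) (q : ℂ[X]) : kernelStep a q =
    C 4 * derivative q - C 8 * (X * derivative q) + C 4 * (X ^ 2 * derivative q)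
    + C (4 * a) * q - C (4 * a) * (X * q)
    + C 4 * (X * derivative (derivative q)) - C 8 * (X ^ 2 * derivative (derivative q))
    + C 4 * (X ^ 3 * derivative (derivative q))
    + C (8 * a) * (X * derivative q) - C (8 * a) * (X ^ 2 * derivative q)
    + C (4 * a * (a + 1)) * (X * q) := by
  simp only [kernelStep, map_ofNat]
  ring

theorem coeff_kernelStep_zero (a : ℂ) (q : ℂ[X]) :
    (kernelStep a q).coeff 0 = 4 * q.coeff 1 + 4 * a * q.coeff 0 := by
  simp [kernelStep_eq, coeff_derivative]

theorem coeff_kernelStep_succ (a : ℂ) (q : ℂ[X]) (k : ℕ) :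
    (kernelStep a q).coeff (k + 1) = 4 * (k + 2) ^ 2 * q.coeff (k + 2)
      + 4 * ((2 * k + 3) * a - 2 * (k + 1) ^ 2) * q.coeff (k + 1)
      + 4 * (a - k) ^ 2 * q.coeff k := by
  rw [kernelStep_eq]
  simp only [coeff_add, coeff_sub, coeff_C_mul, coeff_X_mul, coeff_X_pow_mul',
    coeff_derivative]
  -- for `k ≤ 1` the terms cut off by `X ^ 2` and `X ^ 3` carry a vanishing factor `k` or `k - 1`
  rcases k with _ | _ | k <;> simp <;> ring

theorem natDegree_kernelStep_le {a : ℂ} {q : ℂ[X]} {m : ℕ} (hq : q.natDegree ≤ m) :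
    (kernelStep a q).natDegree ≤ m + 1 := by
  refine natDegree_le_iff_coeff_eq_zero.2 fun k hk => ?_
  obtain ⟨k, rfl⟩ : ∃ j, k = j + 1 := ⟨k - 1, by omega⟩
  rw [coeff_kernelStep_succ, coeff_eq_zero_of_natDegree_lt (by omega),
    coeff_eq_zero_of_natDegree_lt (by omega), coeff_eq_zero_of_natDegree_lt (by omega)]
  ring

theorem coeff_kernelStep_of_natDegree_le {a : ℂ} {q : ℂ[X]} {m : ℕ} (hq : q.natDegree ≤ m) :
    (kernelStep a q).coeff (m + 1) = 4 * (a - m) ^ 2 * q.coeff m := by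
  rw [coeff_kernelStep_succ, coeff_eq_zero_of_natDegree_lt (by omega),
    coeff_eq_zero_of_natDegree_lt (by omega)]
  ring

theorem kernelStep_one (a : ℂ) : kernelStep a 1 = C (4 * a) + C (4 * a ^ 2) * X := by
  simp only [kernelStep, derivative_one, derivative_zero, map_mul, map_add, map_pow, map_one]
  ring

noncomputable def kernelNumerator (α : ℝ) : ℕ → ℂ[X]
  | 0 => 1
  | m + 1 => kernelStep (2 + α + 2 * m) (kernelNumerator α m)

theorem IsKernelNumeratorSeq.eq_kernelNumerator {α : ℝ} {p : ℕ → ℂ[X]}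
    (hp : IsKernelNumeratorSeq α p) {m : ℕ} (hm : 1 ≤ m) : p m = kernelNumerator α m := by
  induction m, hm using Nat.le_induction with
  | base => simp [hp.1, kernelNumerator, kernelStep_one]
  | succ m hm ih =>
    rw [hp.2 m hm, ih, kernelNumerator, kernelStep]
    ring_nf

theorem natDegree_kernelNumerator_le (α : ℝ) (m : ℕ) :
    (kernelNumerator α m).natDegree ≤ m := by
  induction m with
  | zero => simp [kernelNumerator]
  | succ m ih => exact natDegree_kernelStep_le ih

theorem coeff_kernelNumerator_self (α : ℝ) (m : ℕ) :
    (kernelNumerator α m).coeff m = 4 ^ m * ∏ t ∈ range m, ((α : ℂ) + 2 + t) ^ 2 := by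
  induction m with
  | zero => simp [kernelNumerator]
  | succ m ih =>
    rw [kernelNumerator, coeff_kernelStep_of_natDegree_le (natDegree_kernelNumerator_le α m), ih,
      prod_range_succ]
    ring

theorem pow_le_norm_coeff_kernelNumerator_self {α : ℝ} (hα : 0 ≤ α) (m : ℕ) :
    4 ^ m * α ^ (2 * m) ≤ ‖(kernelNumerator α m).coeff m‖ := by
  have hreal : (kernelNumerator α m).coeff m =
      ((4 ^ m * ∏ t ∈ range m, (α + 2 + t) ^ 2 : ℝ) : ℂ) := by
    rw [coeff_kernelNumerator_self]
    push_cast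
    rfl
  have hpow : α ^ (2 * m) = ∏ _t ∈ range m, α ^ 2 := by rw [prod_const, card_range, pow_mul]
  rw [hreal, Complex.norm_real, Real.norm_of_nonneg (by positivity), hpow]
  gcongr with t
  linarith [t.cast_nonneg (α := ℝ)]

theorem isBigO_pow_pow_atTop_of_le {p q : ℕ} (hpq : p ≤ q) :
    (fun x : ℝ => x ^ p) =O[atTop] fun x => x ^ q := by
  rcases hpq.eq_or_lt with rfl | h
  · exact isBigO_refl _ _
  · exact (isLittleO_pow_pow_atTop_of_lt h).isBigO

def CoeffsIsBigOPow (q : ℝ → ℂ[X]) (d : ℕ) : Prop :=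
  ∀ k, (fun α => (q α).coeff k) =O[atTop] fun α => α ^ (d + k)

theorem coeffsIsBigOPow_one : CoeffsIsBigOPow (fun _ => 1) 0 := by
  rintro (_ | k)
  · simpa using isBigO_const_const (1 : ℂ) (one_ne_zero (α := ℝ)) (atTop : Filter ℝ)
  · simpa [coeff_one] using isBigO_zero _ _

theorem CoeffsIsBigOPow.kernelStep {q : ℝ → ℂ[X]} {d : ℕ} (hq : CoeffsIsBigOPow q d)
    {a : ℝ → ℂ} (ha : a =O[atTop] id) :
    CoeffsIsBigOPow (fun α => kernelStep (a α) (q α)) (d + 1) := by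
  have hconst (c : ℂ) : (fun _ : ℝ => c) =O[atTop] (id : ℝ → ℝ) :=
    (isLittleO_const_id_atTop c).isBigO
  rintro (_ | k)
  · simp only [coeff_kernelStep_zero]
    refine ((hq 1).const_mul_left 4).add ?_
    exact ((ha.const_mul_left 4).mul (hq 0)).congr_right fun α => by simp only [id]; ring
  · simp only [coeff_kernelStep_succ]
    refine IsBigO.add (IsBigO.add ?_ ?_) ?_
    · exact ((hq (k + 2)).const_mul_left _).congr_right fun α => by ring_nf
    · exact ((((ha.const_mul_left _).sub (hconst _)).const_mul_left 4).mul
        (hq (k + 1))).congr_right fun α => by simp only [id]; ring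
    · exact ((((ha.sub (hconst _)).pow 2).const_mul_left 4).mul (hq k)).congr_right
        fun α => by simp only [id]; ring

theorem coeffsIsBigOPow_kernelNumerator (m : ℕ) :
    CoeffsIsBigOPow (fun α => kernelNumerator α m) m := by
  induction m with
  | zero => exact coeffsIsBigOPow_one
  | succ m ih =>
    refine ih.kernelStep ?_
    have hα : (fun α : ℝ => (α : ℂ)) =O[atTop] id := isBigO_of_le _ fun α => by simp
    exact ((isLittleO_const_id_atTop _).isBigO.add hα).add (isLittleO_const_id_atTop _).isBigO

theorem isBigO_sum_norm_coeff_kernelNumerator (n : ℕ) :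
    (fun α => ∑ k ∈ range n, ‖(kernelNumerator α n).coeff k‖) =O[atTop]
      fun α => α ^ (2 * n - 1) :=
  IsBigO.fun_sum fun k hk => (coeffsIsBigOPow_kernelNumerator n k).norm_left.trans
    (isBigO_pow_pow_atTop_of_le (by rw [mem_range] at hk; omega))

theorem eventually_sum_norm_coeff_lt_norm_coeff_self {n : ℕ} (hn : 1 ≤ n) :
    ∀ᶠ α in atTop, ∑ k ∈ range n, ‖(kernelNumerator α n).coeff k‖ <
      ‖(kernelNumerator α n).coeff n‖ := by
  have hlittle := (isBigO_sum_norm_coeff_kernelNumerator n).trans_isLittleO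
    (isLittleO_pow_pow_atTop_of_lt (show 2 * n - 1 < 2 * n by omega))
  filter_upwards [hlittle.bound (show (0 : ℝ) < 4 ^ n / 2 by positivity), eventually_gt_atTop 0]
    with α hsum hα
  rw [Real.norm_of_nonneg (sum_nonneg fun _ _ => norm_nonneg _),
    Real.norm_of_nonneg (by positivity)] at hsum
  have := pow_le_norm_coeff_kernelNumerator_self hα.le n
  have : 0 < 4 ^ n * α ^ (2 * n) := by positivity
  linarith

theorem exists_eventually_norm_coeff_kernelNumerator_le (n : ℕ) :
    ∃ C > 0, ∀ᶠ α in atTop, ‖(kernelNumerator α n).coeff n‖ ≤ C * α ^ (2 * n) ∧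
      ∀ k < n, ‖(kernelNumerator α n).coeff k‖ ≤ C * α ^ (2 * n - 1) := by
  obtain ⟨C₁, hC₁, htop⟩ := (coeffsIsBigOPow_kernelNumerator n n).exists_pos
  obtain ⟨C₂, hC₂, hlow⟩ := (isBigO_sum_norm_coeff_kernelNumerator n).exists_pos
  refine ⟨max C₁ C₂, by positivity, ?_⟩
  filter_upwards [htop.bound, hlow.bound, eventually_ge_atTop 0] with α htop hlow hα
  rw [Real.norm_of_nonneg (by positivity), ← two_mul] at htop
  rw [Real.norm_of_nonneg (sum_nonneg fun _ _ => norm_nonneg _),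
    Real.norm_of_nonneg (by positivity)] at hlow
  refine ⟨htop.trans (by gcongr; exact le_max_left _ _), fun k hk => ?_⟩
  calc ‖(kernelNumerator α n).coeff k‖
      ≤ ∑ k ∈ range n, ‖(kernelNumerator α n).coeff k‖ :=
        single_le_sum (fun _ _ => norm_nonneg _) (mem_range.2 hk)
    _ ≤ max C₁ C₂ * α ^ (2 * n - 1) := hlow.trans (by gcongr; exact le_max_right _ _)

/-- As `α → ∞`, `|c_{α,n,n}| ≍ α^{2n}` and `|c_{α,n,k}| ≲ α^{2n-1}` for
`k < n`; consequently for all large `α`, `|c_{α,n,n}| > Σ_{k<n} |c_{α,n,k}|`. -/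
theorem stmt10 (n : ℕ) (hn : 1 ≤ n) (p : ℝ → ℕ → Polynomial ℂ)
    (hp : ∀ α : ℝ, IsKernelNumeratorSeq α (p α)) :
    (∃ c Cp A : ℝ, 0 < c ∧ 0 < Cp ∧ ∀ α : ℝ, A < α →
      (c * α ^ (2 * n) ≤ ‖(p α n).coeff n‖ ∧
        ‖(p α n).coeff n‖ ≤ Cp * α ^ (2 * n)) ∧
      ∀ k < n, ‖(p α n).coeff k‖ ≤ Cp * α ^ (2 * n - 1)) ∧
    ∃ α₀ : ℝ, -1 < α₀ ∧ ∀ α : ℝ, α₀ < α →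
      ∑ k ∈ Finset.range n, ‖(p α n).coeff k‖ < ‖(p α n).coeff n‖ := by
  have hpn (α : ℝ) : p α n = kernelNumerator α n := (hp α).eq_kernelNumerator hn
  simp only [hpn]
  obtain ⟨C, hC, hbound⟩ := exists_eventually_norm_coeff_kernelNumerator_le n
  obtain ⟨A, hA⟩ := eventually_atTop.1 <| (eventually_ge_atTop 0).and <|
    hbound.and (eventually_sum_norm_coeff_lt_norm_coeff_self hn)
  refine ⟨⟨4 ^ n, C, A, by positivity, hC, fun α hα => ?_⟩, max A 0,
    neg_one_lt_zero.trans_le (le_max_right _ _),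
    fun α hα => (hA α ((le_max_left _ _).trans hα.le)).2.2⟩
  obtain ⟨hα₀, ⟨hup, hlow⟩, -⟩ := hA α hα.le
  exact ⟨⟨pow_le_norm_coeff_kernelNumerator_self hα₀ n, hup⟩, hlow⟩
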